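/- Let T > 0, let A : [0,T] → ℝ^{n×n} be integrable, let X : [0,T] → ℝ^{n×n} be absolutely continuous with X'(t) = A_t X_t for almost every t ∈ [0,T], and let 1 ≤ k ≤ n. Then t ↦ ∧ᵏX_t is absolutely continuous and satisfies the compound ODE d/dt (∧ᵏX_t) = A_t^[k] · (∧ᵏX_t) for almost every t ∈ [0,T]. -/

import Mathlib

open MeasureTheory Matrix

/-- The `k`-th multiplicative compound of `X`: the matrix indexed by the
`k`-element subsets of `{1,…,n}` whose `(I,J)` entry is the `k×k` minor of `X`
with rows `I` and columns `J`. -/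
noncomputable def mulCompound {n : ℕ} (k : ℕ) (X : Matrix (Fin n) (Fin n) ℝ) :
    Matrix {s : Finset (Fin n) // s.card = k} {s : Finset (Fin n) // s.card = k} ℝ :=
  fun I J =>
    (X.submatrix (fun a : Fin k => (I.1.orderIsoOfFin I.2 a : Fin n))
      (fun a : Fin k => (J.1.orderIsoOfFin J.2 a : Fin n))).det

/-- The `k`-th additive compound of `A`: the entrywise derivative at `t = 0`
of `t ↦ ∧ᵏ(I + tA)`. -/
noncomputable def addCompound {n : ℕ} (k : ℕ) (A : Matrix (Fin n) (Fin n) ℝ) :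
    Matrix {s : Finset (Fin n) // s.card = k} {s : Finset (Fin n) // s.card = k} ℝ :=
  fun I J =>
    deriv (fun t : ℝ => mulCompound k ((1 : Matrix (Fin n) (Fin n) ℝ) + t • A) I J) 0

/-- The singular values of a real square matrix `M`: the square roots of the
eigenvalues of `MᵀM` (as an unordered family). -/
noncomputable def singularValues {m : Type*} [Fintype m] [DecidableEq m]
    (M : Matrix m m ℝ) : m → ℝ :=
  fun i => Real.sqrt (((by have h := Matrix.isHermitian_conjTranspose_mul_self M; rwa [Matrix.conjTranspose_eq_transpose_of_trivial] at h : (Mᵀ * M).IsHermitian)).eigenvalues i)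

/-- The operator (spectral) norm of a real square matrix, i.e. the norm of the
induced linear operator on Euclidean space. -/
noncomputable def opNorm {m : Type*} [Fintype m] [DecidableEq m]
    (M : Matrix m m ℝ) : ℝ :=
  ‖(Matrix.toEuclideanCLM (𝕜 := ℝ) M : EuclideanSpace ℝ m →L[ℝ] EuclideanSpace ℝ m)‖

/-- The entries of `v` sorted in decreasing order. -/
noncomputable def sortDesc {n : ℕ} (v : Fin n → ℝ) : Fin n → ℝ :=
  fun i => v (Tuple.sort v i.rev)
/-! Since `∧ᵏ` is multiplicative (Cauchy–Binet, which is functoriality of exterior powers),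
along a curve with `γ' = A γ` the derivative of `∧ᵏγ` at `s` equals the derivative at `ε = 0` of
`∧ᵏ((1 + εA) γ s) = ∧ᵏ(1 + εA) ∧ᵏ(γ s)`, namely `A^[k] ∧ᵏ(γ s)`. The minors of `X` are polynomials
in its absolutely continuous entries, hence absolutely continuous, and the fundamental theorem of
calculus for absolutely continuous functions turns this a.e. derivative into the integral form. -/

open Set Filter

namespace AbsolutelyContinuousOnInterval

variable {a b : ℝ}

theorem congr {X : Type*} [PseudoMetricSpace X] {f g : ℝ → X}
    (hf : AbsolutelyContinuousOnInterval f a b) (h : EqOn f g (uIcc a b)) :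
    AbsolutelyContinuousOnInterval g a b := by
  refine Tendsto.congr' (eventually_inf_principal.2 (Eventually.of_forall fun E hE => ?_)) hf
  exact Finset.sum_congr rfl fun i hi => by rw [h (hE.1 i hi).1, h (hE.1 i hi).2]

theorem const {X : Type*} [PseudoMetricSpace X] (c : X) :
    AbsolutelyContinuousOnInterval (fun _ => c) a b :=
  (LipschitzWith.const c).lipschitzOnWith.absolutelyContinuousOnInterval

theorem fun_sum {F ι : Type*} [SeminormedAddCommGroup F] {s : Finset ι} {f : ι → ℝ → F}
    (h : ∀ i ∈ s, AbsolutelyContinuousOnInterval (f i) a b) :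
    AbsolutelyContinuousOnInterval (fun t => ∑ i ∈ s, f i t) a b := by
  classical
  induction s using Finset.induction_on with
  | empty => simpa using const (0 : F)
  | insert i s hi ih =>
    simp only [Finset.sum_insert hi]
    exact (h i (s.mem_insert_self i)).fun_add (ih fun j hj => h j (Finset.mem_insert_of_mem hj))

theorem fun_prod {ι : Type*} {s : Finset ι} {f : ι → ℝ → ℝ}
    (h : ∀ i ∈ s, AbsolutelyContinuousOnInterval (f i) a b) :
    AbsolutelyContinuousOnInterval (fun t => ∏ i ∈ s, f i t) a b := by
  classical
  induction s using Finset.induction_on with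
  | empty => simpa using const (1 : ℝ)
  | insert i s hi ih =>
    simp only [Finset.prod_insert hi]
    exact (h i (s.mem_insert_self i)).fun_mul (ih fun j hj => h j (Finset.mem_insert_of_mem hj))

theorem det {m : Type*} [Fintype m] [DecidableEq m] {M : ℝ → Matrix m m ℝ}
    (h : ∀ i j, AbsolutelyContinuousOnInterval (fun t => M t i j) a b) :
    AbsolutelyContinuousOnInterval (fun t => (M t).det) a b := by
  simp only [Matrix.det_apply']
  exact fun_sum fun σ _ => (fun_prod fun i _ => h _ _).const_mul _

theorem of_eq_add_integral {f f' : ℝ → ℝ} (hf' : IntervalIntegrable f' volume a b)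
    (hf : ∀ t ∈ uIcc a b, f t = f a + ∫ s in a..t, f' s) :
    AbsolutelyContinuousOnInterval f a b :=
  ((const (f a)).fun_add (hf'.absolutelyContinuousOnInterval_intervalIntegral left_mem_uIcc)).congr
    fun t ht => (hf t ht).symm

theorem eq_add_integral_of_ae_hasDerivAt {f f' : ℝ → ℝ} (hab : a ≤ b)
    (hf : AbsolutelyContinuousOnInterval f a b)
    (hderiv : ∀ᵐ t, t ∈ Ioo a b → HasDerivAt f (f' t) t) :
    IntervalIntegrable f' volume a b ∧ ∀ t ∈ Icc a b, f t = f a + ∫ s in a..t, f' s := by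
  have hae : ∀ᵐ t, t ∈ Ioc a b → deriv f t = f' t := by
    filter_upwards [hderiv, volume.ae_ne b] with t ht htb hmem
    exact (ht ⟨hmem.1, hmem.2.lt_of_ne htb⟩).deriv
  refine ⟨hf.intervalIntegrable_deriv.congr_ae ?_, fun t ht => ?_⟩
  · rw [uIoc_of_le hab]
    exact (ae_restrict_iff' measurableSet_Ioc).2 hae
  have hint : ∫ s in a..t, deriv f s = ∫ s in a..t, f' s := by
    refine intervalIntegral.integral_congr_ae ?_
    filter_upwards [hae] with s hs hmem
    rw [uIoc_of_le ht.1] at hmem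
    exact hs ⟨hmem.1, hmem.2.trans ht.2⟩
  have hft : AbsolutelyContinuousOnInterval f a t :=
    hf.mono (uIcc_subset_uIcc left_mem_uIcc (Icc_subset_uIcc ht))
  rw [← hint, hft.integral_deriv_eq_sub]
  ring

end AbsolutelyContinuousOnInterval

theorem ae_hasDerivAt_of_eq_add_integral {f f' : ℝ → ℝ} {a b : ℝ}
    (hf' : IntervalIntegrable f' volume a b)
    (hf : ∀ t ∈ Icc a b, f t = f a + ∫ s in a..t, f' s) :
    ∀ᵐ t, t ∈ Ioo a b → HasDerivAt f (f' t) t := by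
  filter_upwards [hf'.ae_hasDerivAt_integral] with t ht htab
  refine ((ht (Icc_subset_uIcc (Ioo_subset_Icc_self htab)) a left_mem_uIcc).const_add
    (f a)).congr_of_eventuallyEq ?_
  filter_upwards [Icc_mem_nhds htab.1 htab.2] with s hs using hf s hs

def subtypeCardEqEquivPowersetCard (ι : Type*) (k : ℕ) :
    {s : Finset ι // s.card = k} ≃ Set.powersetCard ι k :=
  Equiv.subtypeEquivRight fun _ => Iff.rfl

section Compound

variable {n k : ℕ}

open exteriorPower in
theorem mulCompound_eq_toMatrix_exteriorPower_map (M : Matrix (Fin n) (Fin n) ℝ) :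
    mulCompound k M =
      (LinearMap.toMatrix ((Pi.basisFun ℝ (Fin n)).exteriorPower k)
          ((Pi.basisFun ℝ (Fin n)).exteriorPower k) (map k (toLin' M))).submatrix
        (subtypeCardEqEquivPowersetCard (Fin n) k) (subtypeCardEqEquivPowersetCard (Fin n) k) := by
  ext I J
  rw [submatrix_apply, LinearMap.toMatrix_apply, basis_apply, ιMulti_family, basis_repr_apply,
    map_apply_ιMulti, ιMultiDual_apply_ιMulti, ← det_transpose]
  unfold mulCompound
  congr 1
  ext i j
  simp only [submatrix_apply, powersetCard.ofFinEmbEquiv_symm_apply, Finset.coe_orderIsoOfFin_apply,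
    Function.comp_apply, Pi.basisFun_apply, toLin'_apply, mulVec_single, MulOpposite.op_one,
    one_smul, Module.Basis.coord_apply, Pi.basisFun_repr, col_apply, transpose_apply, of_apply]
  rfl

theorem mulCompound_mul (M N : Matrix (Fin n) (Fin n) ℝ) :
    mulCompound k (M * N) = mulCompound k M * mulCompound k N := by
  simp only [mulCompound_eq_toMatrix_exteriorPower_map, submatrix_mul_equiv,
    ← LinearMap.toMatrix_comp, ← exteriorPower.map_comp, toLin'_mul]

-- Any norm on matrices would do; it only serves to differentiate polynomials in the entries.
attribute [local instance] Matrix.normedAddCommGroup Matrix.normedSpace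

theorem differentiable_mulCompound_apply (I J : {s : Finset (Fin n) // s.card = k}) :
    Differentiable ℝ fun M : Matrix (Fin n) (Fin n) ℝ => mulCompound k M I J := by
  simp only [mulCompound, det_apply, submatrix_apply]
  fun_prop

theorem hasDerivAt_mulCompound_one_add_smul (A : Matrix (Fin n) (Fin n) ℝ)
    (I J : {s : Finset (Fin n) // s.card = k}) :
    HasDerivAt (fun ε : ℝ => mulCompound k (1 + ε • A) I J) (addCompound k A I J) 0 :=
  ((differentiable_mulCompound_apply I J).comp (by fun_prop)).differentiableAt.hasDerivAt

theorem hasDerivAt_mulCompound_apply {γ : ℝ → Matrix (Fin n) (Fin n) ℝ}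
    {A : Matrix (Fin n) (Fin n) ℝ} {t₀ : ℝ}
    (hγ : ∀ i j, HasDerivAt (fun t => γ t i j) ((A * γ t₀) i j) t₀)
    (I J : {s : Finset (Fin n) // s.card = k}) :
    HasDerivAt (fun t => mulCompound k (γ t) I J)
      ((addCompound k A * mulCompound k (γ t₀)) I J) t₀ := by
  have hP := (differentiable_mulCompound_apply I J (γ t₀)).hasFDerivAt
  have hline : HasDerivAt (fun ε : ℝ => mulCompound k (γ t₀ + ε • (A * γ t₀)) I J)
      ((addCompound k A * mulCompound k (γ t₀)) I J) 0 := by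
    have h (ε : ℝ) : γ t₀ + ε • (A * γ t₀) = (1 + ε • A) * γ t₀ := by
      rw [add_mul, one_mul, smul_mul]
    simp only [h, mulCompound_mul, mul_apply]
    exact HasDerivAt.fun_sum fun K _ => (hasDerivAt_mulCompound_one_add_smul A I K).mul_const _
  have hchain := hP.comp_hasDerivAt_of_eq (0 : ℝ)
    (((hasDerivAt_id (0 : ℝ)).smul_const (A * γ t₀)).const_add (γ t₀)) (by simp)
  rw [one_smul] at hchain
  rw [hline.unique hchain]
  exact hP.comp_hasDerivAt t₀ (hasDerivAt_pi.2 fun i => hasDerivAt_pi.2 fun j => hγ i j)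

end Compound

theorem mulCompound_ode_general
    {n k : ℕ} (T : ℝ) (hT : 0 < T)
    (A X : ℝ → Matrix (Fin n) (Fin n) ℝ)
    (hprod : ∀ i j,
      IntervalIntegrable (fun t => (A t * X t) i j) MeasureTheory.volume 0 T)
    (hX : ∀ t ∈ Set.Icc (0:ℝ) T, ∀ i j,
      X t i j = X 0 i j + ∫ s in (0:ℝ)..t, (A s * X s) i j) :
    (∀ I J : {s : Finset (Fin n) // s.card = k},
      IntervalIntegrable
        (fun t => (addCompound k (A t) * mulCompound k (X t)) I J)
        MeasureTheory.volume 0 T) ∧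
    (∀ t ∈ Set.Icc (0:ℝ) T, ∀ I J : {s : Finset (Fin n) // s.card = k},
      mulCompound k (X t) I J = mulCompound k (X 0) I J +
        ∫ s in (0:ℝ)..t, (addCompound k (A s) * mulCompound k (X s)) I J) := by
  have hentry (i j : Fin n) : AbsolutelyContinuousOnInterval (fun t => X t i j) 0 T :=
    .of_eq_add_integral (hprod i j) (by rw [uIcc_of_le hT.le]; exact fun t ht => hX t ht i j)
  have hderiv : ∀ᵐ t, t ∈ Ioo 0 T → ∀ i j,
      HasDerivAt (fun t => X t i j) ((A t * X t) i j) t := by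
    have h i j := ae_hasDerivAt_of_eq_add_integral (hprod i j) fun t ht => hX t ht i j
    filter_upwards [ae_all_iff.2 fun i => ae_all_iff.2 (h i)] with t ht hmem i j
    exact ht i j hmem
  have hminor (I J : {s : Finset (Fin n) // s.card = k}) :=
    (AbsolutelyContinuousOnInterval.det fun a b => hentry _ _).eq_add_integral_of_ae_hasDerivAt
      hT.le (by
        filter_upwards [hderiv] with t ht hmem
        exact hasDerivAt_mulCompound_apply (ht hmem) I J)
  exact ⟨fun I J => (hminor I J).1, fun t ht I J => (hminor I J).2 t ht⟩

/-- Lemma 11, the compound ODE. If `X` is an absolutely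
continuous solution of `X' = A_t X` a.e. on `[0,T]` (encoded in integral form,
with integrable right-hand side), then `∧ᵏX_t` is absolutely continuous and
solves `d/dt (∧ᵏX_t) = A_t^[k] (∧ᵏX_t)` a.e. (again encoded in integral form,
with integrable right-hand side). -/
theorem mulCompound_ode
    {n k : ℕ} (hk1 : 1 ≤ k) (hkn : k ≤ n) (T : ℝ) (hT : 0 < T)
    (A X : ℝ → Matrix (Fin n) (Fin n) ℝ)
    (hAint : ∀ i j, IntervalIntegrable (fun t => A t i j) MeasureTheory.volume 0 T)
    (hprod : ∀ i j,
      IntervalIntegrable (fun t => (A t * X t) i j) MeasureTheory.volume 0 T)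
    (hX : ∀ t ∈ Set.Icc (0:ℝ) T, ∀ i j,
      X t i j = X 0 i j + ∫ s in (0:ℝ)..t, (A s * X s) i j) :
    (∀ I J : {s : Finset (Fin n) // s.card = k},
      IntervalIntegrable
        (fun t => (addCompound k (A t) * mulCompound k (X t)) I J)
        MeasureTheory.volume 0 T) ∧
    (∀ t ∈ Set.Icc (0:ℝ) T, ∀ I J : {s : Finset (Fin n) // s.card = k},
      mulCompound k (X t) I J = mulCompound k (X 0) I J +
        ∫ s in (0:ℝ)..t, (addCompound k (A s) * mulCompound k (X s)) I J) :=
  mulCompound_ode_general T hT A X hprod hX
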